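/- Let n ∈ ℕ, k > 0, let V be a valuation and φ a formula of RPL(⊙) such that V(φ) = scale_k(ℓ) for some ℓ ∈ [−k/2^j, k/2^j], where j ∈ ℕ is the smallest integer with n ≤ 2^j. Then V(⨀'_n φ) = scale_k(n·ℓ). -/

import Mathlib

/-- Terms of ℚ[ReLU, x_i]_{i∈ℕ}; variables are indexed by ℕ. -/
inductive RTerm : Type where
  | const : ℚ → RTerm
  | var : ℕ → RTerm
  | add : RTerm → RTerm → RTerm
  | mul : RTerm → RTerm → RTerm
  | relu : RTerm → RTerm

/-- Value of a term under an evaluation map `E : ℕ → ℝ`. -/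
def RTerm.eval (E : ℕ → ℝ) : RTerm → ℝ
  | .const r => (r : ℝ)
  | .var x => E x
  | .add t t' => t.eval E + t'.eval E
  | .mul t t' => t.eval E * t'.eval E
  | .relu t => max 0 (t.eval E)

/-- Degree of a term. -/
def RTerm.deg : RTerm → ℕ
  | .const _ => 0
  | .var _ => 1
  | .add t t' => max t.deg t'.deg
  | .mul t t' => t.deg + t'.deg
  | .relu t => t.deg

/-- Subterms of a term. -/
def RTerm.subt : RTerm → List RTerm
  | .const r => [.const r]
  | .var x => [.var x]
  | .add t t' => t.subt ++ t'.subt ++ [.add t t']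
  | .mul t t' => t.subt ++ t'.subt ++ [.mul t t']
  | .relu t => t.subt ++ [.relu t]

/-- Proto-neurons. -/
inductive RTerm.ProtoNeuron : RTerm → Prop where
  | const (r : ℚ) : RTerm.ProtoNeuron (.const r)
  | var (x : ℕ) : RTerm.ProtoNeuron (.var x)
  | add {t t'} : RTerm.ProtoNeuron t → RTerm.ProtoNeuron t' → RTerm.ProtoNeuron (.add t t')
  | mul {t t'} : RTerm.ProtoNeuron t → RTerm.ProtoNeuron t' → t.deg + t'.deg ≤ 1 →
      RTerm.ProtoNeuron (.mul t t')
  | relu {t} : RTerm.ProtoNeuron t → RTerm.ProtoNeuron (.relu t)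

/-- `ReLU (w₁·n₁ + (w₂·n₂ + (⋯ + b)))`. -/
def layerNeuron (ws : List (ℚ × RTerm)) (b : ℚ) : RTerm :=
  .relu (ws.foldr (fun wt acc => .add (.mul (.const wt.1) wt.2) acc) (.const b))

/-- Rational-parameter ReLU-activated neural networks of a given depth,
identified with the tuples of their output neurons. -/
inductive IsNN : ℕ → List RTerm → Prop where
  | input (ys : List ℕ) : ys ≠ [] → ys.Nodup → IsNN 0 (ys.map RTerm.var)
  | layer {d : ℕ} {prev : List RTerm} (hprev : IsNN d prev)
      (params : List (List ℚ × ℚ)) (hne : params ≠ [])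
      (hlen : ∀ p ∈ params, p.1.length = prev.length) :
      IsNN (d + 1) (params.map fun p => layerNeuron (p.1.zip prev) p.2)

/-- A neuron is a component of some neural network. -/
def IsNeuron (t : RTerm) : Prop := ∃ d N, IsNN d N ∧ t ∈ N

/-- Formulae of RPL(⊙): truth constants r̄ for r ∈ ℚ ∩ [0,1], proposition
symbols, →_L and ⊙. -/
inductive RPLForm : Type where
  | const : {r : ℚ // 0 ≤ r ∧ r ≤ 1} → RPLForm
  | prop : ℕ → RPLForm
  | impL : RPLForm → RPLForm → RPLForm
  | conj : RPLForm → RPLForm → RPLForm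

/-- A valuation assigns to every proposition symbol a value in [0,1]. -/
def IsValuation (V : ℕ → ℝ) : Prop := ∀ p, 0 ≤ V p ∧ V p ≤ 1

/-- Truth value of an RPL(⊙)-formula under a valuation. -/
def RPLForm.val (V : ℕ → ℝ) : RPLForm → ℝ
  | .const r => (r.1 : ℝ)
  | .prop p => V p
  | .impL φ ψ => min 1 (1 - φ.val V + ψ.val V)
  | .conj φ ψ => φ.val V * ψ.val V

/-- Formulae with no proposition symbols. -/
def RPLForm.propFree : RPLForm → Prop
  | .const _ => True
  | .prop _ => False
  | .impL φ ψ => φ.propFree ∧ ψ.propFree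
  | .conj φ ψ => φ.propFree ∧ ψ.propFree

/-- RPL: the ⊙-free fragment of RPL(⊙). -/
def RPLForm.noConj : RPLForm → Prop
  | .const _ => True
  | .prop _ => True
  | .impL φ ψ => φ.noConj ∧ ψ.noConj
  | .conj _ _ => False

/-- Łukasiewicz logic: the only truth constant is 0̄ and there is no ⊙. -/
def RPLForm.isLuk : RPLForm → Prop
  | .const r => r.1 = 0
  | .prop _ => True
  | .impL φ ψ => φ.isLuk ∧ ψ.isLuk
  | .conj _ _ => False

/-- The fragment RPL(⊙)_{≤ n}. -/
inductive RPLForm.InFrag : ℕ → RPLForm → Prop where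
  | propfree {n φ} : RPLForm.propFree φ → RPLForm.InFrag n φ
  | prop {n} (p : ℕ) : RPLForm.InFrag (n + 1) (.prop p)
  | up {n φ} : RPLForm.InFrag n φ → RPLForm.InFrag (n + 1) φ
  | conj {n i j α β} : RPLForm.InFrag i α → RPLForm.InFrag j β → i + j ≤ n + 1 →
      RPLForm.InFrag (n + 1) (.conj α β)
  | impL {n φ ψ} : RPLForm.InFrag (n + 1) φ → RPLForm.InFrag (n + 1) ψ →
      RPLForm.InFrag (n + 1) (.impL φ ψ)

/-- Formulae of LΠ½. -/
inductive LPiForm : Type where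
  | zero : LPiForm
  | half : LPiForm
  | prop : ℕ → LPiForm
  | impL : LPiForm → LPiForm → LPiForm
  | conj : LPiForm → LPiForm → LPiForm
  | impP : LPiForm → LPiForm → LPiForm

/-- Truth value of an LΠ½-formula under a valuation. -/
noncomputable def LPiForm.val (V : ℕ → ℝ) : LPiForm → ℝ
  | .zero => 0
  | .half => 1 / 2
  | .prop p => V p
  | .impL φ ψ => min 1 (1 - φ.val V + ψ.val V)
  | .conj φ ψ => φ.val V * ψ.val V
  | .impP φ ψ => if φ.val V ≤ ψ.val V then 1 else ψ.val V / φ.val V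

/-- LΠ½-formulae with no proposition symbols (LΠ½_{≤0}). -/
def LPiForm.propFree : LPiForm → Prop
  | .zero => True
  | .half => True
  | .prop _ => False
  | .impL φ ψ => φ.propFree ∧ ψ.propFree
  | .conj φ ψ => φ.propFree ∧ ψ.propFree
  | .impP φ ψ => φ.propFree ∧ ψ.propFree

/-- LΠ½(→_P⁻): no proposition symbols in the scope of →_P. -/
inductive LPiForm.InPF : LPiForm → Prop where
  | base {φ} : LPiForm.propFree φ → LPiForm.InPF φ
  | prop (p : ℕ) : LPiForm.InPF (.prop p)
  | impL {φ ψ} : LPiForm.InPF φ → LPiForm.InPF ψ → LPiForm.InPF (.impL φ ψ)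
  | conj {φ ψ} : LPiForm.InPF φ → LPiForm.InPF ψ → LPiForm.InPF (.conj φ ψ)

/-- LΠ½(⊙⁻, →_P⁻): no proposition symbols in the scope of ⊙ or →_P. -/
inductive LPiForm.InPFF : LPiForm → Prop where
  | base {φ} : LPiForm.propFree φ → LPiForm.InPFF φ
  | prop (p : ℕ) : LPiForm.InPFF (.prop p)
  | impL {φ ψ} : LPiForm.InPFF φ → LPiForm.InPFF ψ → LPiForm.InPFF (.impL φ ψ)

/-- The fragment LΠ½(→_P⁻)_{≤ n}. -/
inductive LPiForm.InFragPF : ℕ → LPiForm → Prop where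
  | propfree {n φ} : LPiForm.propFree φ → LPiForm.InFragPF n φ
  | prop {n} (p : ℕ) : LPiForm.InFragPF (n + 1) (.prop p)
  | up {n φ} : LPiForm.InFragPF n φ → LPiForm.InFragPF (n + 1) φ
  | conj {n i j α β} : LPiForm.InFragPF i α → LPiForm.InFragPF j β → i + j ≤ n + 1 →
      LPiForm.InFragPF (n + 1) (.conj α β)
  | impL {n φ ψ} : LPiForm.InFragPF (n + 1) φ → LPiForm.InFragPF (n + 1) ψ →
      LPiForm.InFragPF (n + 1) (.impL φ ψ)

/-- scale_k(x) = (k + x)/(2k). -/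
noncomputable def scaleK (k x : ℝ) : ℝ := (k + x) / (2 * k)

/-- Equivalence of a term and an RPL(⊙)-formula (the bijection p ↦ x_p is
the identity on ℕ). -/
def TermFormEquiv (t : RTerm) (φ : RPLForm) : Prop :=
  ∀ (E V : ℕ → ℝ), IsValuation V → (∀ x, E x = V x) → t.eval E = φ.val V

/-- (i,k)-equivalence of a formula to a term. -/
def IKEquiv (i k : ℝ) (φ : RPLForm) (t : RTerm) : Prop :=
  ∀ E : ℕ → ℝ, (∀ x, -i ≤ E x ∧ E x ≤ i) →
    φ.val (fun p => scaleK k (E p)) = scaleK k (t.eval E)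

/-- k-equivalence of formulae. -/
def KEquiv (k : ℝ) (ψ φ : RPLForm) : Prop :=
  ∀ V V' : ℕ → ℝ, IsValuation V → IsValuation V' → (∀ p, V' p = scaleK k (V p)) →
    ψ.val V' = scaleK k (φ.val V)

/-- Equivalence of terms. -/
def TermEquiv (t t' : RTerm) : Prop := ∀ E : ℕ → ℝ, t.eval E = t'.eval E

/-- [0,1]-equivalence of terms. -/
def TermEquiv01 (t t' : RTerm) : Prop :=
  ∀ E : ℕ → ℝ, (∀ x, 0 ≤ E x ∧ E x ≤ 1) → t.eval E = t'.eval E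

/-- Equivalence of an RPL(⊙)-formula and an LΠ½-formula. -/
def RLEquiv (φ : RPLForm) (ψ : LPiForm) : Prop :=
  ∀ V : ℕ → ℝ, IsValuation V → φ.val V = ψ.val V

/-- The truth constant 0̄. -/
def RPLForm.zeroC : RPLForm := .const ⟨0, by norm_num⟩

/-- ¬_L φ := φ →_L 0̄. -/
def RPLForm.negL (φ : RPLForm) : RPLForm := φ.impL RPLForm.zeroC

/-- φ ⊕ ψ := ¬_L φ →_L ψ. -/
def RPLForm.oplus (φ ψ : RPLForm) : RPLForm := φ.negL.impL ψ

/-- φ ⊗ ψ := ¬_L (φ →_L ¬_L ψ). -/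
def RPLForm.otimes (φ ψ : RPLForm) : RPLForm := (φ.impL ψ.negL).negL

/-- φ ⊖ ψ := φ ⊗ ¬_L ψ  (semantics: max{0, V(φ) − V(ψ)}). -/
def RPLForm.ominus (φ ψ : RPLForm) : RPLForm := φ.otimes ψ.negL

/-- φ ⊕' ψ := (φ ⊖ ¼̄) ⊕ (ψ ⊖ ¼̄). -/
def RPLForm.oplus' (φ ψ : RPLForm) : RPLForm :=
  (φ.ominus (.const ⟨1/4, by norm_num⟩)).oplus (ψ.ominus (.const ⟨1/4, by norm_num⟩))

/-- The iterated sum ⨀_n. -/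
def RPLForm.bigOplus : ℕ → RPLForm → RPLForm
  | 0, _ => RPLForm.zeroC
  | n + 1, φ => (RPLForm.bigOplus n φ).oplus φ

/-- The iterated operator ⨀'_n; `Nat.clog 2 n` is the least j with n ≤ 2^j. -/
def RPLForm.bigOplus' : ℕ → RPLForm → RPLForm
  | 0, _ => .const ⟨1/2, by norm_num⟩
  | 1, φ => φ
  | n + 2, φ =>
      RPLForm.oplus' (RPLForm.bigOplus' (2 ^ (Nat.clog 2 (n + 2) - 1)) φ)
        (RPLForm.bigOplus' ((n + 2) - 2 ^ (Nat.clog 2 (n + 2) - 1)) φ)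
  termination_by n _ => n
  decreasing_by
  · have h := Nat.pow_pred_clog_lt_self (b := 2) (x := n + 2) (by norm_num) (by omega)
    rw [Nat.pred_eq_sub_one] at h
    exact h
  · have h1 : 0 < 2 ^ (Nat.clog 2 (n + 2) - 1) := by positivity
    omega

theorem inv2k_mem (k : ℕ) (hk : 1 ≤ k) : 0 ≤ (1 / (2 * (k : ℚ))) ∧ (1 / (2 * (k : ℚ))) ≤ 1 := by
  have h : (1 : ℚ) ≤ (k : ℚ) := by exact_mod_cast hk
  constructor
  · positivity
  · rw [div_le_one (by linarith)]
    linarith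

/-- φ ⊙^k ψ := ⨀_k((⨀_2(φ ⊙ ψ) ⊕ (1/(2k))̄) ⊖ (φ ⊕' ψ)). -/
def RPLForm.odotPow (k : ℕ) (hk : 1 ≤ k) (φ ψ : RPLForm) : RPLForm :=
  RPLForm.bigOplus k
    (((RPLForm.bigOplus 2 (φ.conj ψ)).oplus
        (.const ⟨1 / (2 * (k : ℚ)), inv2k_mem k hk⟩)).ominus (φ.oplus' ψ))


lemma oplus'_val_eq (V : ℕ → ℝ) (α β : RPLForm)
    (ha1 : 1/4 ≤ α.val V) (ha2 : α.val V ≤ 3/4)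
    (hb1 : 1/4 ≤ β.val V) (hb2 : β.val V ≤ 3/4) :
    (α.oplus' β).val V = min 1 (α.val V + β.val V - 1/2) := by
  simp only [RPLForm.oplus', RPLForm.oplus, RPLForm.ominus, RPLForm.otimes, RPLForm.negL,
    RPLForm.zeroC, RPLForm.val]
  norm_num
  set x := RPLForm.val V α
  set y := RPLForm.val V β
  rw [min_eq_right (by linarith : (1:ℝ) - x + 1/4 ≤ 1),
      min_eq_right (by linarith : (1:ℝ) - y + 1/4 ≤ 1),
      min_eq_right (by linarith : (1:ℝ) - (1-x+1/4) ≤ 1),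
      min_eq_right (by linarith : (1:ℝ) - (1-y+1/4) ≤ 1)]
  congr 1
  ring


lemma scaleK_window {k : ℝ} (hk : 0 < k) {x : ℝ} (h1 : -(k/2) ≤ x) (h2 : x ≤ k/2) :
    1/4 ≤ scaleK k x ∧ scaleK k x ≤ 3/4 := by
  unfold scaleK
  constructor
  · rw [le_div_iff₀ (by positivity)]; linarith
  · rw [div_le_iff₀ (by positivity)]; linarith

lemma bigOplus'_aux (k : ℝ) (hk : 0 < k) (V : ℕ → ℝ) (φ : RPLForm) :
    ∀ n : ℕ, ∀ l : ℝ, -(k / 2 ^ Nat.clog 2 n) ≤ l → l ≤ k / 2 ^ Nat.clog 2 n →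
      φ.val V = scaleK k l → (RPLForm.bigOplus' n φ).val V = scaleK k ((n : ℝ) * l) := by
  intro n
  induction n using Nat.strong_induction_on with
  | _ n ih =>
    match n with
    | 0 =>
      intro l _ _ _
      rw [RPLForm.bigOplus']
      simp only [RPLForm.val, Nat.cast_zero, zero_mul]
      unfold scaleK
      rw [add_zero, eq_div_iff (by positivity)]
      push_cast; ring
    | 1 =>
      intro l _ _ hφ
      rw [RPLForm.bigOplus', hφ, Nat.cast_one, one_mul]
    | (m + 2) =>
      intro l hl1 hl2 hφ
      set j := Nat.clog 2 (m + 2) with hjdef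
      have hle : m + 2 ≤ 2 ^ j := Nat.le_pow_clog (by norm_num) _
      have hj1 : 1 ≤ j := by
        by_contra h
        interval_cases j <;> omega
      set a := 2 ^ (j - 1) with hadef
      have ha_lt : a < m + 2 := Nat.pow_pred_clog_lt_self (b := 2) (x := m + 2) (by norm_num) (by omega)
      set b := m + 2 - a with hbdef
      have h2j : 2 ^ j = 2 * a := by
        rw [hadef, ← pow_succ']
        congr 1
      have hba : b ≤ a := by omega
      have hb1 : 1 ≤ b := by omega
      have clog_a : Nat.clog 2 a = j - 1 := Nat.clog_pow 2 (j - 1) (by norm_num)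
      have clog_b : Nat.clog 2 b ≤ j - 1 := (Nat.clog_le_iff_le_pow (by norm_num)).mpr hba
      have key : ∀ j' : ℕ, j' ≤ j → k / 2 ^ j ≤ k / 2 ^ j' := by
        intro j' h
        have h2 : (2:ℝ) ^ j' ≤ 2 ^ j := pow_le_pow_right₀ (by norm_num) h
        rw [div_le_div_iff₀ (by positivity) (by positivity)]
        nlinarith
      have ih_a : (RPLForm.bigOplus' a φ).val V = scaleK k ((a : ℝ) * l) := by
        apply ih a ha_lt l _ _ hφ
        · rw [clog_a]; have := key (j - 1) (by omega); linarith
        · rw [clog_a]; have := key (j - 1) (by omega); linarith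
      have ih_b : (RPLForm.bigOplus' b φ).val V = scaleK k ((b : ℝ) * l) := by
        apply ih b (by omega) l _ _ hφ
        · have := key (Nat.clog 2 b) (by omega); linarith
        · have := key (Nat.clog 2 b) (by omega); linarith
      -- real bounds
      set c : ℝ := (2:ℝ) ^ (j - 1) with hcdef
      have hc : 0 < c := by positivity
      have hcar : (a : ℝ) = c := by rw [hadef, hcdef]; push_cast; ring
      have h2jr : (2:ℝ) ^ j = 2 * c := by
        rw [hcdef, ← pow_succ']
        congr 1
      rw [h2jr] at hl1 hl2
      have hl1' : -k ≤ l * (2 * c) := by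
        rw [← neg_div, div_le_iff₀ (by positivity)] at hl1
        linarith
      have hl2' : l * (2 * c) ≤ k := by
        rw [le_div_iff₀ (by positivity)] at hl2
        linarith
      have hmul : ∀ m' : ℝ, 0 ≤ m' → m' ≤ c → -(k/2) ≤ m' * l ∧ m' * l ≤ k/2 := by
        intro m' hm0 hmc
        constructor
        · rcases le_or_gt 0 l with h | h
          · nlinarith [mul_nonneg hm0 h]
          · nlinarith [mul_nonneg (sub_nonneg.mpr hmc) (neg_nonneg.mpr h.le)]
        · rcases le_or_gt 0 l with h | h
          · nlinarith [mul_nonneg (sub_nonneg.mpr hmc) h]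
          · nlinarith [mul_nonneg hm0 (neg_nonneg.mpr h.le)]
      have hma := hmul (a : ℝ) (by positivity) (le_of_eq hcar)
      have hmb := hmul (b : ℝ) (by positivity) (by rw [← hcar]; exact_mod_cast hba)
      have hwa := scaleK_window hk hma.1 hma.2
      have hwb := scaleK_window hk hmb.1 hmb.2
      have hstep : RPLForm.bigOplus' (m + 2) φ =
          RPLForm.oplus' (RPLForm.bigOplus' a φ) (RPLForm.bigOplus' b φ) := by
        rw [RPLForm.bigOplus']
      rw [hstep, oplus'_val_eq V _ _ (by rw [ih_a]; exact hwa.1) (by rw [ih_a]; exact hwa.2)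
        (by rw [ih_b]; exact hwb.1) (by rw [ih_b]; exact hwb.2), ih_a, ih_b]
      have habn : (a : ℝ) * l + (b : ℝ) * l = ((m + 2 : ℕ) : ℝ) * l := by
        have : a + b = m + 2 := by omega
        rw [← this]
        push_cast
        ring
      have hsum : scaleK k ((a : ℝ) * l) + scaleK k ((b : ℝ) * l) - 1/2
          = scaleK k (((m + 2 : ℕ) : ℝ) * l) := by
        rw [← habn]
        unfold scaleK
        field_simp
        ring
      rw [hsum, min_eq_right]
      unfold scaleK
      rw [div_le_one (by positivity), ← habn]
      linarith [hma.2, hmb.2]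

/-- semantics of ⨀'_n as scaled multiplication by n. -/
theorem bigOplus'_val (n j : ℕ) (k : ℝ) (hk : 0 < k) (V : ℕ → ℝ) (hV : IsValuation V)
    (φ : RPLForm) (l : ℝ)
    (hj : n ≤ 2 ^ j) (hjmin : ∀ j' : ℕ, n ≤ 2 ^ j' → j ≤ j')
    (hl : -(k / 2 ^ j) ≤ l ∧ l ≤ k / 2 ^ j)
    (hφ : φ.val V = scaleK k l) :
    (RPLForm.bigOplus' n φ).val V = scaleK k ((n : ℝ) * l) := by
  have hjeq : j = Nat.clog 2 n :=
    le_antisymm (hjmin _ (Nat.le_pow_clog (by norm_num) n))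
      ((Nat.clog_le_iff_le_pow (by norm_num)).mpr hj)
  exact bigOplus'_aux k hk V φ n l (hjeq ▸ hl.1) (hjeq ▸ hl.2) hφ
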